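/- For all natural numbers n > 2, the sum over k from 1 to n of (-1)^k·C(n,k)·k²·H_k² equals n/((n-1)(n-2))·(H_n - (2n³+n²-11n+6)/(n(n-1)(n-2))). -/

import Mathlib

/-!
Write `S f n = ∑ k ≤ n, (-1)^k C(n,k) f k`. Up to the sign `(-1)^n` this is the `n`-th forward
difference of `f` at `0`, so `S f (n + 1) = -S (Δ f) n`. Since `Δ (k² H_k²)` is a combination of
`k H_k²`, `H_k²`, `k H_k`, `H_k` and `1`, repeating this reduces everything to transforms of
`H_k`, `1 / (k + 1)`, `1 / (k + 1)²` and `H_k / (k + 1)`. These are evaluated with the absorption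
identity `(k + 1) C(n + 1, k + 1) = (n + 1) C(n, k)`, which trades `S (g (k + 1) / (k + 1)) n`
for `S g (n + 1)`.
-/

open Finset BigOperators

def H (n : ℕ) : ℚ := ∑ i ∈ Finset.range n, 1 / (i + 1 : ℚ)

def H2 (n : ℕ) : ℚ := ∑ i ∈ Finset.range n, 1 / ((i + 1 : ℚ))^2

open fwdDiff

section BinomialTransform

variable {R : Type*} [CommRing R]

def binomialTransform (f : ℕ → R) (n : ℕ) : R :=
  ∑ k ∈ range (n + 1), (-1) ^ k * n.choose k * f k

theorem binomialTransform_eq_fwdDiff_iter (f : ℕ → R) (n : ℕ) :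
    binomialTransform f n = (-1) ^ n * (Δ_[1])^[n] f 0 := by
  rw [fwdDiff_iter_eq_sum_shift, mul_sum]
  refine sum_congr rfl fun k hk => ?_
  obtain ⟨j, rfl⟩ := Nat.exists_eq_add_of_le (mem_range_succ_iff.1 hk)
  rw [zsmul_eq_mul, Nat.add_sub_cancel_left]
  push_cast
  simp only [zero_add, smul_eq_mul, mul_one]
  ring_nf
  simp

theorem binomialTransform_succ (f : ℕ → R) (n : ℕ) :
    binomialTransform f (n + 1) = -binomialTransform (Δ_[1] f) n := by
  rw [binomialTransform_eq_fwdDiff_iter, binomialTransform_eq_fwdDiff_iter,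
    Function.iterate_succ_apply, pow_succ]
  ring

theorem binomialTransform_add (f g : ℕ → R) (n : ℕ) :
    binomialTransform (fun k => f k + g k) n = binomialTransform f n + binomialTransform g n := by
  simp only [binomialTransform, mul_add, sum_add_distrib]

theorem binomialTransform_sub (f g : ℕ → R) (n : ℕ) :
    binomialTransform (fun k => f k - g k) n = binomialTransform f n - binomialTransform g n := by
  simp only [binomialTransform, mul_sub, sum_sub_distrib]

theorem binomialTransform_const_mul (c : R) (f : ℕ → R) (n : ℕ) :
    binomialTransform (fun k => c * f k) n = c * binomialTransform f n := by
  simp only [binomialTransform, mul_sum]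
  exact sum_congr rfl fun _ _ => by ring

theorem binomialTransform_const_succ (c : R) (n : ℕ) :
    binomialTransform (fun _ => c) (n + 1) = 0 := by
  rw [binomialTransform_succ, fwdDiff_const]
  simp [binomialTransform]

theorem sum_Icc_one_eq_binomialTransform (f : ℕ → R) (hf : f 0 = 0) (n : ℕ) :
    ∑ k ∈ Icc 1 n, (-1) ^ k * n.choose k * f k = binomialTransform f n := by
  rw [binomialTransform, range_eq_Ico, sum_eq_sum_Ico_succ_bot (by omega : 0 < n + 1), hf,
    mul_zero, zero_add, zero_add, Ico_add_one_right_eq_Icc]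

theorem add_one_mul_binomialTransform_div {K : Type*} [Field K] [CharZero K] (g : ℕ → K)
    (n : ℕ) :
    (n + 1) * binomialTransform (fun k => g (k + 1) / (k + 1)) n
      = g 0 - binomialTransform g (n + 1) := by
  rw [binomialTransform, binomialTransform, sum_range_succ' _ (n + 1), mul_sum]
  have absorb (k : ℕ) : ((n + 1).choose (k + 1) : K) * (k + 1) = (n + 1) * n.choose k := by
    exact_mod_cast (Nat.add_one_mul_choose_eq n k).symm
  have term (k : ℕ) : ((n : K) + 1) * ((-1) ^ k * n.choose k * (g (k + 1) / (k + 1)))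
      = -((-1) ^ (k + 1) * (n + 1).choose (k + 1) * g (k + 1)) := by
    field_simp
    linear_combination (-(-1 : K) ^ k * g (k + 1)) * absorb k
  simp only [term, sum_neg_distrib]
  simp

end BinomialTransform

theorem H_zero : H 0 = 0 := rfl

theorem H_succ (k : ℕ) : H (k + 1) = H k + 1 / (k + 1) := by
  simp [H, sum_range_succ]

theorem fwdDiff_H : Δ_[1] H = fun k : ℕ => 1 / ((k : ℚ) + 1) := by
  funext k
  simp [fwdDiff, H_succ]

theorem fwdDiff_one_div :
    Δ_[1] (fun k : ℕ => 1 / (k : ℚ)) = fun k : ℕ => 1 / ((k : ℚ) + 1) - 1 / k := by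
  funext k
  simp [fwdDiff]

theorem fwdDiff_H_sq :
    Δ_[1] (fun k => H k ^ 2) = fun k : ℕ => 2 * (H k / ((k : ℚ) + 1)) + 1 / ((k : ℚ) + 1) ^ 2 := by
  funext k
  simp only [fwdDiff, H_succ]
  field_simp
  ring

theorem fwdDiff_mul_H : Δ_[1] (fun k : ℕ => (k : ℚ) * H k) = fun k : ℕ => H k + 1 := by
  funext k
  simp only [fwdDiff, H_succ]
  push_cast
  field_simp
  ring

theorem fwdDiff_mul_H_sq :
    Δ_[1] (fun k : ℕ => (k : ℚ) * H k ^ 2)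
      = fun k : ℕ => H k ^ 2 + 2 * H k + 1 / ((k : ℚ) + 1) := by
  funext k
  simp only [fwdDiff, H_succ]
  push_cast
  field_simp
  ring

theorem fwdDiff_sq_mul_H_sq :
    Δ_[1] (fun k : ℕ => (k : ℚ) ^ 2 * H k ^ 2)
      = fun k : ℕ => 2 * (k * H k ^ 2) + H k ^ 2 + 2 * (k * H k) + 2 * H k + 1 := by
  funext k
  simp only [fwdDiff, H_succ]
  push_cast
  field_simp
  ring

theorem binomialTransform_inv_add_one (n : ℕ) :
    binomialTransform (fun k => 1 / ((k : ℚ) + 1)) n = 1 / (n + 1) := by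
  have h := add_one_mul_binomialTransform_div (fun _ => (1 : ℚ)) n
  rw [binomialTransform_const_succ] at h
  rw [eq_div_iff (by positivity), mul_comm]
  simpa using h

-- `1 / 0 = 0` makes the `k = 0` term vanish.
theorem binomialTransform_one_div : ∀ n : ℕ, binomialTransform (fun k => 1 / (k : ℚ)) n = -H n
  | 0 => by simp [binomialTransform, H]
  | n + 1 => by
    rw [binomialTransform_succ, fwdDiff_one_div, binomialTransform_sub,
      binomialTransform_inv_add_one, binomialTransform_one_div n, H_succ]
    ring

theorem binomialTransform_inv_add_one_sq (n : ℕ) :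
    binomialTransform (fun k => 1 / ((k : ℚ) + 1) ^ 2) n = H (n + 1) / (n + 1) := by
  have h := add_one_mul_binomialTransform_div (fun k => 1 / (k : ℚ)) n
  have shape :
      (fun k : ℕ => 1 / ((k + 1 : ℕ) : ℚ) / (k + 1)) = fun k : ℕ => 1 / ((k : ℚ) + 1) ^ 2 := by
    funext k; push_cast; rw [div_div, ← sq]
  rw [shape, binomialTransform_one_div] at h
  rw [eq_div_iff (by positivity), mul_comm, h]
  simp

theorem binomialTransform_H_succ (n : ℕ) : binomialTransform H (n + 1) = -1 / (n + 1) := by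
  rw [binomialTransform_succ, fwdDiff_H, binomialTransform_inv_add_one]
  ring

theorem binomialTransform_H_div (n : ℕ) :
    binomialTransform (fun k => H k / ((k : ℚ) + 1)) n = 1 / (n + 1) ^ 2 - H (n + 1) / (n + 1) := by
  have h := add_one_mul_binomialTransform_div H n
  have split : (fun k : ℕ => H (k + 1) / ((k : ℚ) + 1))
      = fun k : ℕ => H k / ((k : ℚ) + 1) + 1 / ((k : ℚ) + 1) ^ 2 := by
    funext k; rw [H_succ]; field_simp
  rw [split, binomialTransform_add, binomialTransform_inv_add_one_sq, binomialTransform_H_succ,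
    H_zero] at h
  field_simp at h ⊢
  linear_combination h

theorem binomialTransform_H_sq_succ (n : ℕ) :
    binomialTransform (fun k => H k ^ 2) (n + 1) = H (n + 1) / (n + 1) - 2 / (n + 1) ^ 2 := by
  rw [binomialTransform_succ, fwdDiff_H_sq, binomialTransform_add, binomialTransform_const_mul,
    binomialTransform_H_div, binomialTransform_inv_add_one_sq]
  ring

theorem binomialTransform_mul_H (n : ℕ) :
    binomialTransform (fun k => (k : ℚ) * H k) (n + 2) = 1 / (n + 1) := by
  rw [binomialTransform_succ, fwdDiff_mul_H, binomialTransform_add, binomialTransform_H_succ,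
    binomialTransform_const_succ]
  ring

theorem binomialTransform_mul_H_sq (n : ℕ) :
    binomialTransform (fun k => (k : ℚ) * H k ^ 2) (n + 2)
      = 2 / (n + 1) ^ 2 + 2 / (n + 1) - H (n + 1) / (n + 1) - 1 / (n + 2) := by
  rw [binomialTransform_succ, fwdDiff_mul_H_sq, binomialTransform_add, binomialTransform_add,
    binomialTransform_const_mul, binomialTransform_H_sq_succ, binomialTransform_H_succ,
    binomialTransform_inv_add_one]
  push_cast
  ring

theorem binomialTransform_sq_mul_H_sq (n : ℕ) :
    binomialTransform (fun k => (k : ℚ) ^ 2 * H k ^ 2) (n + 3)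
      = (2 / (n + 1) - 1 / (n + 2)) * H (n + 1)
        - 4 / (n + 1) ^ 2 - 6 / (n + 1) + 4 / (n + 2) + 1 / (n + 2) ^ 2 := by
  rw [binomialTransform_succ, fwdDiff_sq_mul_H_sq]
  simp only [binomialTransform_add, binomialTransform_const_mul, binomialTransform_mul_H_sq,
    binomialTransform_H_sq_succ, binomialTransform_mul_H, binomialTransform_H_succ,
    binomialTransform_const_succ, H_succ (n + 1)]
  push_cast
  field_simp
  ring

theorem stmt19 (n : ℕ) (hn : 2 < n) :
    ∑ k ∈ Finset.Icc 1 n, (-1 : ℚ)^k * (n.choose k : ℚ) * (k : ℚ)^2 * H k^2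
      = (n : ℚ) / (((n : ℚ) - 1) * ((n : ℚ) - 2))
          * (H n - (2 * (n : ℚ)^3 + (n : ℚ)^2 - 11 * n + 6) / (n * ((n : ℚ) - 1) * ((n : ℚ) - 2))) := by
  obtain ⟨m, rfl⟩ : ∃ m, n = m + 3 := ⟨n - 3, by omega⟩
  have lhs : ∑ k ∈ Icc 1 (m + 3), (-1 : ℚ) ^ k * ((m + 3).choose k : ℚ) * (k : ℚ) ^ 2 * H k ^ 2
      = binomialTransform (fun k => (k : ℚ) ^ 2 * H k ^ 2) (m + 3) := by
    rw [← sum_Icc_one_eq_binomialTransform _ (by simp)]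
    exact sum_congr rfl fun k _ => by ring
  rw [lhs, binomialTransform_sq_mul_H_sq, H_succ (m + 2), H_succ (m + 1)]
  push_cast
  rw [show (m : ℚ) + 3 - 1 = m + 2 by ring, show (m : ℚ) + 3 - 2 = m + 1 by ring]
  field_simp
  ring
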